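/- In the free dialgebra Di⟨X⟩, let T be the set of polynomials [u]_m ⊢ [v]_n − [v]_n ⊢ [u]_m and [u]_m ⊣ [v]_n − [v]_n ⊣ [u]_m over all normal diwords, and let S be the set of polynomials [u]_m − ⌊u⌋_m for |u| = 2 together with [v]_n − ⌊v⌋₁ for |v| ≥ 3. Then the two-sided dialgebra ideal generated by T equals the ideal generated by S. -/

import Mathlib

variable {X : Type*} [LinearOrder X] {k : Type*} [Field k]

/-- (u,m) ⊢ (v,n) = (uv, |u| + n). -/
def opL (a b : List X × ℕ) : List X × ℕ := (a.1 ++ b.1, a.1.length + b.2)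

/-- (u,m) ⊣ (v,n) = (uv, m). -/
def opR (a b : List X × ℕ) : List X × ℕ := (a.1 ++ b.1, a.2)

/-- (u,m) ∈ [X⁺]_ω. -/
def IsND (p : List X × ℕ) : Prop := p.1 ≠ [] ∧ 1 ≤ p.2 ∧ p.2 ≤ p.1.length

/-- Bilinear extension of an operation on monomials to the free dialgebra Di⟨X⟩. -/
noncomputable def dmul (op : (List X × ℕ) → (List X × ℕ) → (List X × ℕ))
    (f g : (List X × ℕ) →₀ k) : (List X × ℕ) →₀ k :=
  f.sum fun a ca => g.sum fun b cb => Finsupp.single (op a b) (ca * cb)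

/-- The two-sided dialgebra ideal of Di⟨X⟩ generated by a set T. -/
noncomputable def diIdeal (T : Set ((List X × ℕ) →₀ k)) :
    Submodule k ((List X × ℕ) →₀ k) :=
  sInf {I | T ⊆ I ∧ ∀ a ∈ I, ∀ g : (List X × ℕ) →₀ k,
    dmul opL g a ∈ I ∧ dmul opL a g ∈ I ∧ dmul opR g a ∈ I ∧ dmul opR a g ∈ I}

/-- ⌊u⌋: the nondecreasing rearrangement of u. -/
def sortW (u : List X) : List X := u.insertionSort (· ≤ ·)

/-- T: the commutativity relations [u]_m ⊢ [v]_n − [v]_n ⊢ [u]_m and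
[u]_m ⊣ [v]_n − [v]_n ⊣ [u]_m over all normal diwords. -/
def Tset : Set ((List X × ℕ) →₀ k) :=
  {h | ∃ a b : List X × ℕ, IsND a ∧ IsND b ∧
    (h = Finsupp.single (opL a b) 1 - Finsupp.single (opL b a) 1 ∨
     h = Finsupp.single (opR a b) 1 - Finsupp.single (opR b a) 1)}

/-- S: [u]_m − ⌊u⌋_m for |u| = 2, and [v]_n − ⌊v⌋₁ for |v| ≥ 3. -/
def Sset : Set ((List X × ℕ) →₀ k) :=
  {h | ∃ u : List X, ∃ m : ℕ, u.length = 2 ∧ 1 ≤ m ∧ m ≤ u.length ∧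
    h = Finsupp.single (u, m) 1 - Finsupp.single (sortW u, m) 1} ∪
  {h | ∃ v : List X, ∃ n : ℕ, 3 ≤ v.length ∧ 1 ≤ n ∧ n ≤ v.length ∧
    h = Finsupp.single (v, n) 1 - Finsupp.single (sortW v, 1) 1}

/-!
Modulo the ideal generated by `T`, the `⊣`-commutation `[u]_m ⊣ [v]_n ≡ [v]_n ⊣ [u]_m` lets one
permute the letters of a diword at index 1 freely and move any index `m < |w|` to 1 by a rotation,
while the `⊢`-commutation moves the last index `|w|` of `w = u x` to 2 in `x u`. For `|w| ≥ 3`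
every `[w]_m` is therefore congruent to `⌊w⌋_1`, and for `|w| = 2` the two commutations of single
letters are exactly the relations of `S`. Conversely, both sides of a relation of `T` have the
same letters, and (in length 2) the same index, so modulo `S` they reduce to the same sorted diword.
-/

section Algebra

omit [LinearOrder X]

section Multiplication

variable (op : (List X × ℕ) → (List X × ℕ) → (List X × ℕ))

lemma dmul_single_single (a b : List X × ℕ) (c d : k) :
    dmul op (Finsupp.single a c) (Finsupp.single b d) = Finsupp.single (op a b) (c * d) := by
  unfold dmul
  rw [Finsupp.sum_single_index, Finsupp.sum_single_index] <;> simp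

lemma dmul_sub_left (f f' g : (List X × ℕ) →₀ k) :
    dmul op (f - f') g = dmul op f g - dmul op f' g := by
  unfold dmul
  rw [Finsupp.sum_sub_index]
  intro a b₁ b₂
  rw [← Finsupp.sum_sub]
  congr 1
  ext b cb
  rw [sub_mul, Finsupp.single_sub]

lemma dmul_sub_right (f g g' : (List X × ℕ) →₀ k) :
    dmul op f (g - g') = dmul op f g - dmul op f g' := by
  unfold dmul
  rw [← Finsupp.sum_sub]
  congr 1
  ext a ca
  rw [Finsupp.sum_sub_index]
  intro b b₁ b₂
  rw [mul_sub, Finsupp.single_sub]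

end Multiplication

def IsDiIdeal (I : Submodule k ((List X × ℕ) →₀ k)) : Prop :=
  ∀ a ∈ I, ∀ g : (List X × ℕ) →₀ k,
    dmul opL g a ∈ I ∧ dmul opL a g ∈ I ∧ dmul opR g a ∈ I ∧ dmul opR a g ∈ I

variable {T S : Set ((List X × ℕ) →₀ k)}

lemma subset_diIdeal : T ⊆ diIdeal T := fun _ hx =>
  Submodule.mem_sInf.mpr fun _ hI => hI.1 hx

lemma diIdeal_le {I : Submodule k ((List X × ℕ) →₀ k)} (hT : T ⊆ I) (hI : IsDiIdeal I) :
    diIdeal T ≤ I :=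
  sInf_le ⟨hT, hI⟩

lemma isDiIdeal_diIdeal : IsDiIdeal (diIdeal T) := by
  intro a ha g
  simp only [diIdeal, Submodule.mem_sInf, Set.mem_ofPred_eq] at ha ⊢
  refine ⟨?_, ?_, ?_, ?_⟩ <;>
    · intro I hI
      have := hI.2 a (ha I hI) g
      tauto

lemma diIdeal_le_diIdeal (h : T ⊆ diIdeal S) : diIdeal T ≤ diIdeal S :=
  diIdeal_le h isDiIdeal_diIdeal

def DiCongr (T : Set ((List X × ℕ) →₀ k)) (p q : List X × ℕ) : Prop :=
  Finsupp.single p (1 : k) - Finsupp.single q 1 ∈ diIdeal T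

namespace DiCongr

variable {T : Set ((List X × ℕ) →₀ k)} {p q r : List X × ℕ}

@[refl]
lemma refl (T : Set ((List X × ℕ) →₀ k)) (p : List X × ℕ) : DiCongr T p p := by
  simp [DiCongr]

lemma symm (h : DiCongr T p q) : DiCongr T q p := by
  simpa only [DiCongr, neg_sub] using Submodule.neg_mem _ h

lemma trans (h₁ : DiCongr T p q) (h₂ : DiCongr T q r) : DiCongr T p r := by
  simpa only [DiCongr, sub_add_sub_cancel] using Submodule.add_mem _ h₁ h₂

lemma opR_left (h : DiCongr T p q) (c : List X × ℕ) : DiCongr T (opR c p) (opR c q) := by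
  have := (isDiIdeal_diIdeal _ h (Finsupp.single c 1)).2.2.1
  rwa [dmul_sub_right, dmul_single_single, dmul_single_single, one_mul] at this

lemma opR_right (h : DiCongr T p q) (c : List X × ℕ) : DiCongr T (opR p c) (opR q c) := by
  have := (isDiIdeal_diIdeal _ h (Finsupp.single c 1)).2.2.2
  rwa [dmul_sub_left, dmul_single_single, dmul_single_single, one_mul] at this

end DiCongr

section Commutation

variable {u v : List X} {m n : ℕ}

lemma isND_of_le_length (h1 : 1 ≤ m) (h2 : m ≤ u.length) : IsND (u, m) :=
  ⟨List.ne_nil_of_length_pos (by omega : 0 < u.length), h1, h2⟩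

lemma isND_singleton (x : X) : IsND (([x], 1) : List X × ℕ) :=
  isND_of_le_length le_rfl le_rfl

lemma diCongr_append_comm_opR (hu : IsND (u, m)) (hv : IsND (v, n)) :
    DiCongr (Tset (k := k)) (u ++ v, m) (v ++ u, n) :=
  subset_diIdeal ⟨_, _, hu, hv, Or.inr rfl⟩

lemma diCongr_append_comm_opL (hu : IsND (u, m)) (hv : IsND (v, n)) :
    DiCongr (Tset (k := k)) (u ++ v, u.length + n) (v ++ u, v.length + m) :=
  subset_diIdeal ⟨_, _, hu, hv, Or.inl rfl⟩

lemma diCongr_of_perm (h : u.Perm v) : DiCongr (Tset (k := k)) (u, 1) (v, 1) := by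
  induction h with
  | nil => rfl
  | cons x _ ih => exact ih.opR_left ([x], 1)
  | swap x y l =>
    exact (diCongr_append_comm_opR (isND_singleton y) (isND_singleton x)).opR_right (l, 1)
  | trans _ _ ih₁ ih₂ => exact ih₁.trans ih₂

lemma diCongr_rotate (h1 : 1 ≤ n) (h2 : n < v.length) :
    DiCongr (Tset (k := k)) (v, n) (v.rotate n, 1) := by
  have h := diCongr_append_comm_opR (k := k) (u := v.take n) (v := v.drop n) (m := n) (n := 1)
    (isND_of_le_length h1 (by simp; omega)) (isND_of_le_length le_rfl (by simp; omega))
  rwa [List.take_append_drop, ← List.rotate_eq_drop_append_take h2.le] at h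

lemma diCongr_concat_length_succ {x : X} (hu : 2 ≤ u.length) :
    DiCongr (Tset (k := k)) (u ++ [x], u.length + 1) ((x :: u).rotate 2, 1) :=
  (diCongr_append_comm_opL (isND_of_le_length le_rfl (by omega)) (isND_singleton x)).trans
    (diCongr_rotate (by norm_num) (by simp; omega))

end Commutation

end Algebra

lemma sortW_perm (u : List X) : (sortW u).Perm u := List.perm_insertionSort _ u

lemma sortW_eq_of_perm {u v : List X} (h : u.Perm v) : sortW u = sortW v :=
  List.Perm.eq_of_pairwise' (r := (· ≤ ·)) (List.pairwise_insertionSort _ u)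
    (List.pairwise_insertionSort _ v) (((sortW_perm u).trans h).trans (sortW_perm v).symm)

lemma diCongr_sortW_of_three_le_length {v : List X} {n : ℕ} (h3 : 3 ≤ v.length) (h1 : 1 ≤ n)
    (h2 : n ≤ v.length) : DiCongr (Tset (k := k)) (v, n) (sortW v, 1) := by
  obtain ⟨v', hperm, hv'⟩ : ∃ v' : List X, v'.Perm v ∧ DiCongr (Tset (k := k)) (v, n) (v', 1) := by
    rcases h2.lt_or_eq with hlt | rfl
    · exact ⟨_, List.rotate_perm v n, diCongr_rotate h1 hlt⟩
    · obtain ⟨u, x, rfl⟩ := (List.eq_nil_or_concat v).resolve_left (by rintro rfl; simp at h3)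
      simp only [List.concat_eq_append, List.length_append, List.length_singleton] at h3 ⊢
      exact ⟨_, (List.rotate_perm _ 2).trans (List.perm_append_comm (l₁ := [x])),
        diCongr_concat_length_succ (by omega)⟩
  exact hv'.trans (diCongr_of_perm (hperm.trans (sortW_perm v).symm))

lemma diCongr_sortW_pair (x y : X) {m : ℕ} (h1 : 1 ≤ m) (h2 : m ≤ 2) :
    DiCongr (Tset (k := k)) ([x, y], m) (sortW [x, y], m) := by
  rcases le_or_gt x y with hxy | hyx
  · rw [show sortW [x, y] = [x, y] by simp [sortW, hxy]]
  · have hsort : sortW [x, y] = [y, x] := by simp [sortW, hyx.not_ge]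
    rw [hsort]
    interval_cases m
    · simpa using diCongr_append_comm_opR (k := k) (isND_singleton x) (isND_singleton y)
    · simpa using diCongr_append_comm_opL (k := k) (isND_singleton x) (isND_singleton y)

lemma Sset_subset_diIdeal_Tset : Sset (X := X) (k := k) ⊆ diIdeal (Tset (X := X) (k := k)) := by
  rintro _ (⟨u, m, hu, h1, h2, rfl⟩ | ⟨v, n, hv, h1, h2, rfl⟩)
  · obtain ⟨x, y, rfl⟩ := List.length_eq_two.mp hu
    exact diCongr_sortW_pair x y h1 h2
  · exact diCongr_sortW_of_three_le_length hv h1 h2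

lemma diCongr_Sset_sortW {w : List X} {i : ℕ} (h2 : 2 ≤ w.length) (h1 : 1 ≤ i)
    (hi : i ≤ w.length) :
    DiCongr (Sset (k := k)) (w, i) (sortW w, if w.length = 2 then i else 1) := by
  split_ifs with hw
  · exact subset_diIdeal (Or.inl ⟨w, i, hw, h1, hi, rfl⟩)
  · exact subset_diIdeal (Or.inr ⟨w, i, by omega, h1, hi, rfl⟩)

lemma diCongr_Sset_of_perm {w₁ w₂ : List X} {i₁ i₂ : ℕ} (hp : w₁.Perm w₂)
    (h2 : 2 ≤ w₁.length) (h1₁ : 1 ≤ i₁) (hi₁ : i₁ ≤ w₁.length) (h1₂ : 1 ≤ i₂)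
    (hi₂ : i₂ ≤ w₂.length) (hpair : w₁.length = 2 → i₁ = i₂) :
    DiCongr (Sset (k := k)) (w₁, i₁) (w₂, i₂) := by
  have hlen := hp.length_eq
  have hsorted : (sortW w₁, if w₁.length = 2 then i₁ else 1) =
      (sortW w₂, if w₂.length = 2 then i₂ else 1) := by
    rw [sortW_eq_of_perm hp, ← hlen]
    split_ifs with hw
    · rw [hpair hw]
    · rfl
  exact (diCongr_Sset_sortW h2 h1₁ hi₁).trans
    (hsorted ▸ (diCongr_Sset_sortW (by omega) h1₂ hi₂).symm)

lemma Tset_subset_diIdeal_Sset : Tset (X := X) (k := k) ⊆ diIdeal (Sset (X := X) (k := k)) := by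
  rintro _ ⟨⟨u, m⟩, ⟨v, n⟩, ⟨hu, hm1, hm2⟩, ⟨hv, hn1, hn2⟩, rfl | rfl⟩ <;>
  · have hu_pos := List.length_pos_iff.mpr hu
    have hv_pos := List.length_pos_iff.mpr hv
    refine diCongr_Sset_of_perm List.perm_append_comm ?_ ?_ ?_ ?_ ?_ ?_ <;>
      simp only [List.length_append] at * <;> omega

theorem stmt18_general :
    diIdeal (Tset (X := X) (k := k)) = diIdeal (Sset (X := X) (k := k)) :=
  le_antisymm (diIdeal_le_diIdeal Tset_subset_diIdeal_Sset)
    (diIdeal_le_diIdeal Sset_subset_diIdeal_Tset)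

/-- Over a well-ordered alphabet X, the dialgebra ideal generated by
the commutativity relations T equals the ideal generated by S. -/
theorem stmt18 (hwo : WellFoundedLT X) :
    diIdeal (Tset (X := X) (k := k)) = diIdeal (Sset (X := X) (k := k)) :=
  stmt18_general
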